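/- Let φ: [t₁, ∞) → ℝ be absolutely continuous with 0 ≤ φ(t₁) and φ'(t) ≥ b(c² − φ(t)²) a.e. for constants b > 0, 0 < c ≤ 1, where additionally φ(t) ≤ 1 for all t. Then for all t ≥ t₁, φ(t) ≥ c · tanh((t − t₁)·b·c). -/

import Mathlib

/-!
For `l < 1` the profile `g x = c tanh((x - t₁) l b c)` solves `g' = l b (c² - g²)`. Wherever
`g` touches `φ` we have `φ² = g² < c²`, so `g' < b (c² - φ²) ≤ φ'` there, and the strict
comparison principle gives `g ≤ φ`. Letting `l → 1⁻` yields the claim.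
-/

open Filter Set Topology

namespace Real

theorem hasDerivAt_tanh (x : ℝ) : HasDerivAt tanh (1 - tanh x ^ 2) x := by
  have h := (hasDerivAt_sinh x).div (hasDerivAt_cosh x) (cosh_pos x).ne'
  rw [show sinh / cosh = tanh from funext fun y => (tanh_eq_sinh_div_cosh y).symm] at h
  refine h.congr_deriv ?_
  have hc := cosh_pos x
  rw [tanh_eq_sinh_div_cosh]
  field_simp

@[fun_prop]
theorem continuous_tanh : Continuous tanh :=
  continuous_iff_continuousAt.2 fun x => (hasDerivAt_tanh x).continuousAt

end Real

open Real

theorem hasDerivAt_mul_tanh_riccati (t₀ b c x : ℝ) :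
    HasDerivAt (fun x => c * tanh ((x - t₀) * b * c))
      (b * (c ^ 2 - (c * tanh ((x - t₀) * b * c)) ^ 2)) x := by
  have hlin : HasDerivAt (fun x => (x - t₀) * b * c) (b * c) x := by
    simpa using (((hasDerivAt_id x).sub_const t₀).mul_const b).mul_const c
  exact (((hasDerivAt_tanh _).comp x hlin).const_mul c).congr_deriv (by ring)

theorem mul_tanh_le_of_riccati_supersolution {φ φ' : ℝ → ℝ} {t₁ b c l : ℝ} (hb : 0 < b)
    (hc : c ≠ 0) (hl : l < 1) (hφ : ∀ t, t₁ ≤ t → HasDerivAt φ (φ' t) t)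
    (h0 : 0 ≤ φ t₁)
    (hineq : ∀ t, t₁ ≤ t → b * (c ^ 2 - φ t ^ 2) ≤ φ' t) {t : ℝ} (ht : t₁ ≤ t) :
    c * tanh ((t - t₁) * (l * b) * c) ≤ φ t := by
  have hg := hasDerivAt_mul_tanh_riccati t₁ (l * b) c
  refine image_le_of_deriv_right_lt_deriv_boundary'
    (fun x _ => (hg x).continuousAt.continuousWithinAt) (fun x _ => (hg x).hasDerivWithinAt)
    (by simpa using h0) (fun x hx => (hφ x hx.1).continuousAt.continuousWithinAt)
    (fun x hx => (hφ x hx.1).hasDerivWithinAt) ?_ (right_mem_Icc.2 ht)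
  intro x hx htouch
  have hgap : 0 < c ^ 2 - φ x ^ 2 := by
    rw [← htouch, mul_pow, sub_pos]
    exact mul_lt_of_lt_one_right (by positivity) (tanh_sq_lt_one _)
  rw [htouch]
  nlinarith [hineq x hx.1, mul_pos hb hgap]

theorem stmt18_general (φ φ' : ℝ → ℝ) (t₁ b c : ℝ) (hb : 0 < b) (hc0 : 0 < c)
    (hφ : ∀ t, t₁ ≤ t → HasDerivAt φ (φ' t) t)
    (h0 : 0 ≤ φ t₁)
    (hineq : ∀ t, t₁ ≤ t → φ' t ≥ b * (c ^ 2 - (φ t) ^ 2)) :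
    ∀ t, t₁ ≤ t → φ t ≥ c * Real.tanh ((t - t₁) * b * c) := by
  intro t ht
  have hcont : Tendsto (fun l => c * tanh ((t - t₁) * (l * b) * c)) (𝓝[<] 1)
      (𝓝 (c * tanh ((t - t₁) * b * c))) := by
    have : Continuous fun l => c * tanh ((t - t₁) * (l * b) * c) := by fun_prop
    simpa using (this.tendsto 1).mono_left nhdsWithin_le_nhds
  refine le_of_tendsto hcont ?_
  filter_upwards [self_mem_nhdsWithin] with l hl
  exact mul_tanh_le_of_riccati_supersolution hb hc0.ne' hl hφ h0 hineq ht

/-- ODE comparison with `tanh`: if `φ(t₁) ≥ 0`, `φ ≤ 1`, and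
`φ' t ≥ b (c² − φ(t)²)` for `t ≥ t₁`, with `b > 0`, `0 < c ≤ 1`, then
`φ t ≥ c tanh((t − t₁) b c)` for all `t ≥ t₁`. -/
theorem stmt18 (φ φ' : ℝ → ℝ) (t₁ b c : ℝ) (hb : 0 < b) (hc0 : 0 < c) (hc1 : c ≤ 1)
    (hφ : ∀ t, t₁ ≤ t → HasDerivAt φ (φ' t) t)
    (h0 : 0 ≤ φ t₁)
    (hub : ∀ t, t₁ ≤ t → φ t ≤ 1)
    (hineq : ∀ t, t₁ ≤ t → φ' t ≥ b * (c ^ 2 - (φ t) ^ 2)) :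
    ∀ t, t₁ ≤ t → φ t ≥ c * Real.tanh ((t - t₁) * b * c) :=
  stmt18_general φ φ' t₁ b c hb hc0 hφ h0 hineq
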